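/- Let w := φ₀ ⊗ φ₂ - φ₂ ⊗ φ₀ ∈ ℂ⁴ (Kronecker products). Then: (i) w = -(φ₃ ⊗ φ₁ - φ₁ ⊗ φ₃), so in particular P(φ₀ ⊗ φ₂ - φ₂ ⊗ φ₀)/2 = P(φ₃ ⊗ φ₁ - φ₁ ⊗ φ₃)/2; and (ii) w is orthogonal to every two-photon SARG04 state: ⟨φ_m ⊗ φ_m, w⟩ = 0 for all m ∈ {0, 1, 2, 3}. -/
import Mathlib


open Matrix Real
open scoped ComplexOrder

noncomputable section

/-- Standard basis vector `e₀` of `ℂ²`. -/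
def e0 : Fin 2 → ℂ := ![1, 0]
/-- Standard basis vector `e₁` of `ℂ²`. -/
def e1 : Fin 2 → ℂ := ![0, 1]

/-- `P(v) = v v†`, the rank-one matrix associated with `v ∈ ℂ²`. -/
def P (v : Fin 2 → ℂ) : Matrix (Fin 2) (Fin 2) ℂ := vecMulVec v (star v)

/-- The rotation `R = cos(π/4)·I + sin(π/4)·(e₁e₀† - e₀e₁†)`. -/
def Rrot : Matrix (Fin 2) (Fin 2) ℂ :=
  (Real.cos (π / 4) : ℂ) • 1 +
    (Real.sin (π / 4) : ℂ) • (vecMulVec e1 (star e0) - vecMulVec e0 (star e1))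

/-- The SARG04 states `φ_m = R^{-m} φ₀` with `φ₀ = cos(π/8) e₀ + sin(π/8) e₁`,
indices effectively taken modulo 4. -/
def φ (m : ℤ) : Fin 2 → ℂ :=
  (Rrot ^ (-m)).mulVec ((Real.cos (π / 8) : ℂ) • e0 + (Real.sin (π / 8) : ℂ) • e1)
/-- Kronecker (tensor) product of two vectors in `ℂ²`, giving a vector in `ℂ² ⊗ ℂ² ≅ ℂ⁴`. -/
def tensor (v w : Fin 2 → ℂ) : Fin 2 × Fin 2 → ℂ := fun p => v p.1 * w p.2

/-- `P₄(v) = v v†`, the rank-one `4×4` matrix associated with `v ∈ ℂ⁴`. -/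
def P4 (v : Fin 2 × Fin 2 → ℂ) : Matrix (Fin 2 × Fin 2) (Fin 2 × Fin 2) ℂ :=
  vecMulVec v (star v)

/-- The two-photon SARG04 states `ψ_m = φ_m ⊗ φ_m` (indices mod 4). -/
def ψ (m : ℤ) : Fin 2 × Fin 2 → ℂ := tensor (φ m) (φ m)
local notation "K" => ((Real.sqrt 2 : ℝ) : ℂ)

lemma hK : K ^ 2 = 2 := by
  norm_cast
  rw [sq, Real.mul_self_sqrt (by norm_num)]

lemma h1 : ((Real.cos (π / 8) : ℝ) : ℂ) ^ 2 + ((Real.sin (π / 8) : ℝ) : ℂ) ^ 2 = 1 := by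
  norm_cast
  rw [← Real.cos_sq_add_sin_sq (π / 8)]

lemma Rrot_eq : Rrot = !![K/2, -(K/2); K/2, K/2] := by
  have h4 : (Real.cos (π/4) : ℂ) = K / 2 := by
    rw [Real.cos_pi_div_four]; push_cast; ring
  have h4' : (Real.sin (π/4) : ℂ) = K / 2 := by
    rw [Real.sin_pi_div_four]; push_cast; ring
  ext i j
  fin_cases i <;> fin_cases j <;>
    simp [Rrot, vecMulVec, e0, e1, one_apply, h4, h4']

lemma Rsq : Rrot ^ 2 = !![0, -1; 1, 0] := by
  rw [Rrot_eq, pow_two]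
  ext i j
  fin_cases i <;> fin_cases j <;>
    simp [Matrix.mul_apply, Fin.sum_univ_two] <;>
    first
      | linear_combination (1/4 : ℂ) * hK
      | linear_combination (-1/4 : ℂ) * hK
      | linear_combination (3/4 : ℂ) * hK
      | linear_combination (-3/4 : ℂ) * hK
      | linear_combination (1/2 : ℂ) * hK
      | linear_combination (-1/2 : ℂ) * hK

lemma Rcube : Rrot ^ 3 = !![-(K/2), -(K/2); K/2, -(K/2)] := by
  rw [pow_succ, Rsq, Rrot_eq]
  ext i j
  fin_cases i <;> fin_cases j <;> simp [Matrix.mul_apply, Fin.sum_univ_two]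

lemma φ0 : φ 0 = ![(Real.cos (π/8) : ℂ), (Real.sin (π/8) : ℂ)] := by
  ext i
  fin_cases i <;>
    simp [φ, e0, e1, -Real.cos_pi_div_eight, -Real.sin_pi_div_eight]

lemma φ2 : φ 2 = ![(Real.sin (π/8) : ℂ), -(Real.cos (π/8) : ℂ)] := by
  have hinv : (Rrot ^ 2)⁻¹ = !![0, 1; -1, 0] := by
    apply Matrix.inv_eq_right_inv
    rw [Rsq]
    ext i j
    fin_cases i <;> fin_cases j <;> simp [Matrix.mul_apply, Fin.sum_univ_two, one_apply]
  have h : φ 2 = (!![0, 1; -1, 0] : Matrix (Fin 2) (Fin 2) ℂ).mulVec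
      ((Real.cos (π/8) : ℂ) • e0 + (Real.sin (π/8) : ℂ) • e1) := by
    rw [φ, show (-2 : ℤ) = -(2:ℕ) by norm_num, Matrix.zpow_neg_natCast, hinv]
  rw [h]
  ext i
  fin_cases i <;>
    simp [Matrix.mulVec, dotProduct, Fin.sum_univ_two, e0, e1,
      -Real.cos_pi_div_eight, -Real.sin_pi_div_eight]

lemma φ1 : φ 1 = ![K/2 * (Real.cos (π/8) : ℂ) + K/2 * (Real.sin (π/8) : ℂ),
    -(K/2 * (Real.cos (π/8) : ℂ)) + K/2 * (Real.sin (π/8) : ℂ)] := by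
  have hinv : (Rrot ^ 1)⁻¹ = !![K/2, K/2; -(K/2), K/2] := by
    apply Matrix.inv_eq_right_inv
    rw [pow_one, Rrot_eq]
    ext i j
    fin_cases i <;> fin_cases j <;>
      simp [Matrix.mul_apply, Fin.sum_univ_two, one_apply] <;>
      first
        | linear_combination (1/2 : ℂ) * hK
        | linear_combination (-1/2 : ℂ) * hK
        | linear_combination (1/4 : ℂ) * hK
        | linear_combination (-1/4 : ℂ) * hK
  have h : φ 1 = (!![K/2, K/2; -(K/2), K/2] : Matrix (Fin 2) (Fin 2) ℂ).mulVec
      ((Real.cos (π/8) : ℂ) • e0 + (Real.sin (π/8) : ℂ) • e1) := by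
    rw [φ, show (-1 : ℤ) = -(1:ℕ) by norm_num, Matrix.zpow_neg_natCast, hinv]
  rw [h]
  ext i
  fin_cases i <;>
    simp [Matrix.mulVec, dotProduct, Fin.sum_univ_two, e0, e1,
      -Real.cos_pi_div_eight, -Real.sin_pi_div_eight] <;>
    ring

lemma φ3 : φ 3 = ![-(K/2 * (Real.cos (π/8) : ℂ)) + K/2 * (Real.sin (π/8) : ℂ),
    -(K/2 * (Real.cos (π/8) : ℂ)) - K/2 * (Real.sin (π/8) : ℂ)] := by
  have hinv : (Rrot ^ 3)⁻¹ = !![-(K/2), K/2; -(K/2), -(K/2)] := by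
    apply Matrix.inv_eq_right_inv
    rw [Rcube]
    ext i j
    fin_cases i <;> fin_cases j <;>
      simp [Matrix.mul_apply, Fin.sum_univ_two, one_apply] <;>
      first
        | linear_combination (1/2 : ℂ) * hK
        | linear_combination (-1/2 : ℂ) * hK
        | linear_combination (1/4 : ℂ) * hK
        | linear_combination (-1/4 : ℂ) * hK
  have h : φ 3 = (!![-(K/2), K/2; -(K/2), -(K/2)] : Matrix (Fin 2) (Fin 2) ℂ).mulVec
      ((Real.cos (π/8) : ℂ) • e0 + (Real.sin (π/8) : ℂ) • e1) := by
    rw [φ, show (-3 : ℤ) = -(3:ℕ) by norm_num, Matrix.zpow_neg_natCast, hinv]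
  rw [h]
  ext i
  fin_cases i <;>
    simp [Matrix.mulVec, dotProduct, Fin.sum_univ_two, e0, e1,
      -Real.cos_pi_div_eight, -Real.sin_pi_div_eight] <;>
    ring

lemma ortho (v a b : Fin 2 → ℂ) :
    star (tensor v v) ⬝ᵥ (tensor a b - tensor b a) = 0 := by
  simp [tensor, dotProduct, Fintype.sum_prod_type, Fin.sum_univ_two]
  ring

/-- The 'vacuum' direction `w = φ₀⊗φ₂ - φ₂⊗φ₀` satisfies `w = -(φ₃⊗φ₁ - φ₁⊗φ₃)`
(so the two expressions for `M_vac` agree) and is orthogonal to every two-photon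
SARG04 state `ψ_m = φ_m ⊗ φ_m`. -/
theorem sarg04_vacuum_direction :
    (tensor (φ 0) (φ 2) - tensor (φ 2) (φ 0)
        = -(tensor (φ 3) (φ 1) - tensor (φ 1) (φ 3)) ∧
      ((1 : ℂ) / 2) • P4 (tensor (φ 0) (φ 2) - tensor (φ 2) (φ 0))
        = ((1 : ℂ) / 2) • P4 (tensor (φ 3) (φ 1) - tensor (φ 1) (φ 3))) ∧
    ∀ m : Fin 4,
      star (ψ (m : ℤ)) ⬝ᵥ (tensor (φ 0) (φ 2) - tensor (φ 2) (φ 0)) = 0 := by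
  have h2 := hK
  have h3 := h1
  have hw : tensor (φ 0) (φ 2) - tensor (φ 2) (φ 0)
      = -(tensor (φ 3) (φ 1) - tensor (φ 1) (φ 3)) := by
    funext p
    obtain ⟨i, j⟩ := p
    fin_cases i <;> fin_cases j <;>
      simp only [φ0, φ1, φ2, φ3, tensor, Pi.sub_apply, Pi.neg_apply] <;>
      simp [-Real.cos_pi_div_eight, -Real.sin_pi_div_eight,
        -Complex.ofReal_cos, -Complex.ofReal_sin] <;>
      (try simp only [hK]) <;>
      first
        | ring1
        | linear_combination h3
        | linear_combination -h3
        | linear_combination 2*h3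
        | linear_combination -2*h3
        | linear_combination h3/2
        | linear_combination -h3/2
        | linear_combination (((Real.cos (π/8):ℝ):ℂ)^2 + ((Real.sin (π/8):ℝ):ℂ)^2)/2 * h2
        | linear_combination -((((Real.cos (π/8):ℝ):ℂ)^2 + ((Real.sin (π/8):ℝ):ℂ)^2)/2 * h2)
  refine ⟨⟨hw, ?_⟩, fun m => ortho _ _ _⟩
  rw [hw]
  congr 1
  funext i j
  simp [P4, vecMulVec]
  ring
end
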